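/- Let G : [0,1] → (matrices of rational functions over ℂ of size n×m) be a family of rational matrices, let p : [0,1] → ℂ be continuous with p(t) a pole of G(t) for every t ∈ [0,1], let Δ ∈ ℝ and M ∈ ℝ, and suppose that for every t ∈ [0,1] and every ω ∈ ℝ for which Δ + iω is not a pole of G(t) one has σ̄(G(t)(Δ + iω)) ≤ M. Then Re(p(t)) ≠ Δ for all t ∈ [0,1], and Re(p(t)) − Δ has the same sign for all t; in particular, if Re(p(0)) < Δ then Re(p(1)) < Δ, i.e. the pole cannot cross the vertical line {Δ + iω : ω ∈ ℝ}. -/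

import Mathlib

open Polynomial Filter Topology Matrix

/-- The largest singular value `σ̄(M)` of a complex `n × m` matrix, i.e. its operator norm
as a linear map `(ℂ^m, ‖·‖₂) → (ℂ^n, ‖·‖₂)`. -/
noncomputable def sigmaMax {n m : ℕ} (M : Matrix (Fin n) (Fin m) ℂ) : ℝ :=
  ‖LinearMap.toContinuousLinearMap (Matrix.toEuclideanLin M)‖

/-- Entrywise evaluation of a matrix of rational functions at a point `s : ℂ`. -/
noncomputable def evalMat {n m : ℕ} (G : Matrix (Fin n) (Fin m) (RatFunc ℂ)) (s : ℂ) :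
    Matrix (Fin n) (Fin m) ℂ :=
  fun i j => (G i j).eval (RingHom.id ℂ) s

/-- `s` is a pole of the rational matrix `G` if the denominator (in coprime
numerator/denominator form) of at least one entry vanishes at `s` (Definition 1). -/
def IsPole {n m : ℕ} (G : Matrix (Fin n) (Fin m) (RatFunc ℂ)) (s : ℂ) : Prop :=
  ∃ i j, (G i j).denom.eval s = 0

lemma norm_apply_le_sigmaMax {n m : ℕ} (A : Matrix (Fin n) (Fin m) ℂ) (i : Fin n) (j : Fin m) :
    ‖A i j‖ ≤ sigmaMax A := by
  let L := LinearMap.toContinuousLinearMap (Matrix.toEuclideanLin A)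
  have hcol : L (EuclideanSpace.single j 1) i = A i j := by
    simp [L, Matrix.mulVec_single]
  calc ‖A i j‖ = ‖L (EuclideanSpace.single j 1) i‖ := by rw [hcol]
    _ ≤ ‖L (EuclideanSpace.single j 1)‖ := PiLp.norm_apply_le _ _
    _ ≤ ‖L‖ := L.unit_le_opNorm _ (by simp)

lemma RatFunc.eval_num_ne_zero_of_eval_denom_eq_zero {K : Type*} [Field K] (r : RatFunc K)
    {x : K} (h : r.denom.eval x = 0) : r.num.eval x ≠ 0 := by
  intro hnum
  obtain ⟨a, b, hab⟩ := RatFunc.isCoprime_num_denom r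
  simpa [h, hnum] using congrArg (Polynomial.eval x) hab

lemma finite_setOf_isPole {n m : ℕ} (G : Matrix (Fin n) (Fin m) (RatFunc ℂ)) :
    {s | IsPole G s}.Finite := by
  have hunion : {s | IsPole G s} = ⋃ i, ⋃ j, {s | (G i j).denom.IsRoot s} := by
    ext; simp [IsPole]
  rw [hunion]
  exact Set.finite_iUnion fun i => Set.finite_iUnion fun j =>
    Polynomial.finite_setOfPred_isRoot (RatFunc.denom_ne_zero _)

lemma dense_setOf_not_isPole_line {n m : ℕ} (G : Matrix (Fin n) (Fin m) (RatFunc ℂ))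
    (Δ : ℝ) : Dense {ω : ℝ | ¬ IsPole G ((Δ : ℂ) + ω * Complex.I)} := by
  have hinj : Function.Injective fun ω : ℝ => (Δ : ℂ) + ω * Complex.I := fun a b hab => by
    simpa using congrArg Complex.im hab
  have hfin : {ω : ℝ | IsPole G ((Δ : ℂ) + ω * Complex.I)}.Finite :=
    (finite_setOf_isPole G).preimage (f := fun ω : ℝ => (Δ : ℂ) + ω * Complex.I)
      hinj.injOn
  exact hfin.countable.dense_compl ℝ

/-- At a pole `s` on the line, the bound `‖num‖ ≤ M ‖denom‖` of one entry holds off the finitely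
many poles, hence everywhere on the line by continuity, and at `s` it forces `num s = 0`,
contradicting coprimality. -/
lemma not_isPole_of_re_eq {n m : ℕ} (G : Matrix (Fin n) (Fin m) (RatFunc ℂ)) (Δ M : ℝ)
    (hbound : ∀ ω : ℝ, ¬ IsPole G ((Δ : ℂ) + ω * Complex.I) →
      sigmaMax (evalMat G ((Δ : ℂ) + ω * Complex.I)) ≤ M)
    {s : ℂ} (hs : s.re = Δ) : ¬ IsPole G s := by
  rintro ⟨i, j, hden⟩
  set γ : ℝ → ℂ := fun ω => (Δ : ℂ) + ω * Complex.I
  have hentry : ∀ ω ∈ {ω | ¬ IsPole G (γ ω)},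
      ‖(G i j).num.eval (γ ω)‖ ≤ M * ‖(G i j).denom.eval (γ ω)‖ := by
    intro ω hω
    have hd : (G i j).denom.eval (γ ω) ≠ 0 := fun h => hω ⟨i, j, h⟩
    have hdiv : evalMat G (γ ω) i j = (G i j).num.eval (γ ω) / (G i j).denom.eval (γ ω) := rfl
    rw [← div_le_iff₀ (norm_pos_iff.2 hd), ← norm_div, ← hdiv]
    exact (norm_apply_le_sigmaMax _ i j).trans (hbound ω hω)
  have hline : ‖(G i j).num.eval (γ s.im)‖ ≤ M * ‖(G i j).denom.eval (γ s.im)‖ :=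
    le_on_closure hentry (by fun_prop) (by fun_prop)
      ((dense_setOf_not_isPole_line G Δ).closure_eq ▸ Set.mem_univ s.im)
  have hs' : γ s.im = s := by apply Complex.ext <;> simp [γ, hs]
  rw [hs', hden, norm_zero, mul_zero, norm_le_zero_iff] at hline
  exact RatFunc.eval_num_ne_zero_of_eval_denom_eq_zero _ hden hline

lemma IsPreconnected.mul_pos_of_forall_ne_zero {X : Type*} [TopologicalSpace X] {s : Set X}
    (hs : IsPreconnected s) {f : X → ℝ} (hf : ContinuousOn f s) (hne : ∀ x ∈ s, f x ≠ 0)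
    {x y : X} (hx : x ∈ s) (hy : y ∈ s) : 0 < f x * f y := by
  by_contra! hxy
  have hzero : (0 : ℝ) ∈ f '' s := by
    rcases mul_nonpos_iff.1 hxy with ⟨hfx, hfy⟩ | ⟨hfx, hfy⟩
    · exact hs.intermediate_value hy hx hf ⟨hfy, hfx⟩
    · exact hs.intermediate_value hx hy hf ⟨hfx, hfy⟩
  obtain ⟨z, hz, hfz⟩ := hzero
  exact hne z hz hfz

/-- **Theorem 2 of the paper.** Let `G t` be a family of rational matrices
for `t ∈ [0,1]`, let `p t` be a continuously varying pole of `G t`, and suppose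
`σ̄(G t (Δ + iω)) ≤ M` for all `t ∈ [0,1]` and all non-pole points `Δ + iω` of the
vertical line. Then `Re (p t) ≠ Δ` for all `t`, the sign of `Re (p t) - Δ` is constant,
and in particular if `Re (p 0) < Δ` then `Re (p 1) < Δ`: the pole cannot cross the line. -/
theorem pole_cannot_cross_line {n m : ℕ}
    (G : ℝ → Matrix (Fin n) (Fin m) (RatFunc ℂ)) (p : ℝ → ℂ)
    (hp : ContinuousOn p (Set.Icc (0 : ℝ) 1))
    (hpole : ∀ t ∈ Set.Icc (0 : ℝ) 1, IsPole (G t) (p t))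
    (Δ M : ℝ)
    (hbound : ∀ t ∈ Set.Icc (0 : ℝ) 1, ∀ ω : ℝ,
      ¬ IsPole (G t) ((Δ : ℂ) + ω * Complex.I) →
      sigmaMax (evalMat (G t) ((Δ : ℂ) + ω * Complex.I)) ≤ M) :
    (∀ t ∈ Set.Icc (0 : ℝ) 1, (p t).re ≠ Δ) ∧
    (∀ t ∈ Set.Icc (0 : ℝ) 1, ∀ t' ∈ Set.Icc (0 : ℝ) 1,
      0 < ((p t).re - Δ) * ((p t').re - Δ)) ∧
    ((p 0).re < Δ → (p 1).re < Δ) := by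
  have hne : ∀ t ∈ Set.Icc (0 : ℝ) 1, (p t).re ≠ Δ := fun t ht hre =>
    not_isPole_of_re_eq (G t) Δ M (hbound t ht) hre (hpole t ht)
  have hsign : ∀ t ∈ Set.Icc (0 : ℝ) 1, ∀ t' ∈ Set.Icc (0 : ℝ) 1,
      0 < ((p t).re - Δ) * ((p t').re - Δ) := fun t ht t' ht' =>
    isPreconnected_Icc.mul_pos_of_forall_ne_zero
      ((Complex.continuous_re.comp_continuousOn hp).sub continuousOn_const)
      (fun t ht => sub_ne_zero.2 (hne t ht)) ht ht'
  refine ⟨hne, hsign, fun h0 => ?_⟩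
  exact sub_neg.1 <| neg_of_mul_pos_right (hsign 0 (by norm_num) 1 (by norm_num))
    (sub_neg.2 h0).le
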